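/- Let G₁ = ⊔_{i=1}^r G_{1i} be a finite simple graph with connected components G_{1i} on vertex sets V_{1i}, and G₂ a graph on vertex set V₂ disjoint from V₁ = ∪ V_{1i}, with r ≥ 2 and V₂ nonempty. Let G = G₁ * G₂ and let T = V₂ ∪ (∪_{i=1}^r T_{1i}) where each T_{1i} ⊆ V_{1i} is either empty or has the cut point property for G_{1i}. Then every j ∈ T is a cut point of the induced subgraph of G on ((V₁ ∪ V₂) ∖ T) ∪ {j}; in particular T has the cut point property for G. -/

import Mathlib

/-!
Once `T` is removed only vertices of `G₁` remain, so the components of `G - T` are the disjoint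
union of those of the graphs `G₁ᵢ - T₁ᵢ`; each of these `r ≥ 2` graphs is
nonempty, so `G - T` has at least two components. Putting back a vertex of `V₂` connects
everything to it, leaving one component. Putting back a vertex of `T₁ᵢ` changes only the
`i`-th summand of the count, which drops by the cut point property of `T₁ᵢ`.
-/

open SimpleGraph

/-- The join `G₁ * G₂` of two graphs on disjoint vertex sets: all edges of `G₁`,
all edges of `G₂`, and all pairs between the two vertex sets. -/
def join {V₁ V₂ : Type*} (G₁ : SimpleGraph V₁) (G₂ : SimpleGraph V₂) :
    SimpleGraph (V₁ ⊕ V₂) where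
  Adj x y :=
    match x, y with
    | .inl a, .inl b => G₁.Adj a b
    | .inr a, .inr b => G₂.Adj a b
    | .inl _, .inr _ => True
    | .inr _, .inl _ => True
  symm := ⟨by rintro (a|a) (b|b) h <;> first | exact h.symm | trivial⟩
  loopless := ⟨by rintro (a|a) h <;> exact h.ne rfl⟩

/-- The number of connected components of the induced subgraph of `G` on `s`. -/
noncomputable def numComp {V : Type*} (G : SimpleGraph V) (s : Set V) : ℕ :=
  Nat.card (G.induce s).ConnectedComponent

/-- `T` has the cut point property for `G`: `T` is nonempty and every `i ∈ T` is a
cut point of the induced subgraph of `G` on `(V ∖ T) ∪ {i}`, i.e. removing `i` from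
that induced subgraph strictly increases the number of connected components. -/
def HasCutPointProperty {V : Type*} (G : SimpleGraph V) (T : Set V) : Prop :=
  T.Nonempty ∧ ∀ i ∈ T, numComp G (Tᶜ ∪ {i}) < numComp G Tᶜ

/-- The disjoint union of a family of graphs, on the sigma type of their vertex sets. -/
def sigmaGraph {ι : Type*} {W : ι → Type*} (H : ∀ i, SimpleGraph (W i)) :
    SimpleGraph (Σ i, W i) where
  Adj x y := ∃ i a b, (H i).Adj a b ∧ x = ⟨i, a⟩ ∧ y = ⟨i, b⟩
  symm := ⟨by rintro x y ⟨i, a, b, h, rfl, rfl⟩; exact ⟨i, b, a, h.symm, rfl, rfl⟩⟩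
  loopless := ⟨by
    rintro x ⟨i, a, b, h, rfl, he⟩
    simp only [Sigma.mk.inj_iff, heq_eq_eq, true_and] at he
    exact h.ne he⟩

section NumComp

variable {V : Type*} {G : SimpleGraph V} {s : Set V}

lemma nonempty_of_numComp_pos (h : 0 < numComp G s) : s.Nonempty := by
  obtain ⟨⟨c⟩, -⟩ := Nat.card_pos_iff.mp h
  obtain ⟨v, -⟩ := c.nonempty_supp
  exact ⟨v, v.2⟩

lemma numComp_pos [Finite V] (hs : s.Nonempty) : 0 < numComp G s :=
  have : Nonempty s := hs.to_subtype
  Nat.card_pos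

lemma numComp_eq_one_of_connected (h : (G.induce s).Connected) : numComp G s = 1 :=
  Nat.card_eq_one_iff_unique.mpr
    ⟨h.preconnected.subsingleton_connectedComponent,
      ⟨(G.induce s).connectedComponentMk h.nonempty.some⟩⟩

lemma HasCutPointProperty.compl_nonempty {T : Set V} (hT : HasCutPointProperty G T) :
    Tᶜ.Nonempty :=
  nonempty_of_numComp_pos (Nat.zero_lt_of_lt (hT.2 _ hT.1.some_mem))

end NumComp

namespace sigmaGraph

variable {ι : Type*} {W : ι → Type*} (H : ∀ i, SimpleGraph (W i))

def incl (i : ι) : H i →g sigmaGraph H where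
  toFun a := ⟨i, a⟩
  map_rel' h := ⟨i, _, _, h, rfl, rfl⟩

variable {H}

lemma fst_eq_of_adj {x y : Σ i, W i} (h : (sigmaGraph H).Adj x y) : x.1 = y.1 := by
  obtain ⟨i, a, b, -, rfl, rfl⟩ := h
  rfl

@[simp]
lemma adj_mk_mk {i : ι} {a b : W i} : (sigmaGraph H).Adj ⟨i, a⟩ ⟨i, b⟩ ↔ (H i).Adj a b := by
  refine ⟨?_, (incl H i).map_rel⟩
  rintro ⟨j, c, d, h, hc, hd⟩
  obtain ⟨rfl, hc⟩ := Sigma.mk.inj_iff.mp hc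
  obtain ⟨-, hd⟩ := Sigma.mk.inj_iff.mp hd
  rwa [eq_of_heq hc, eq_of_heq hd]

lemma mk_connectedComponentMk_eq_of_reachable {x y : Σ i, W i}
    (h : (sigmaGraph H).Reachable x y) :
    (⟨x.1, (H x.1).connectedComponentMk x.2⟩ : Σ i, (H i).ConnectedComponent)
      = ⟨y.1, (H y.1).connectedComponentMk y.2⟩ := by
  obtain ⟨w⟩ := h
  induction w with
  | nil => rfl
  | @cons x y z hxy _ ih =>
    obtain ⟨i, a⟩ := x
    obtain ⟨j, b⟩ := y
    obtain rfl : i = j := fst_eq_of_adj hxy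
    rw [← ih, ConnectedComponent.eq.mpr (adj_mk_mk.mp hxy).reachable]

variable (H)

noncomputable def connectedComponentEquiv :
    (sigmaGraph H).ConnectedComponent ≃ Σ i, (H i).ConnectedComponent where
  toFun := Quot.lift (fun x => ⟨x.1, (H x.1).connectedComponentMk x.2⟩)
    fun _ _ => mk_connectedComponentMk_eq_of_reachable
  invFun c := c.2.map (incl H c.1)
  left_inv := ConnectedComponent.ind fun _ => rfl
  right_inv := fun ⟨_, c⟩ => ConnectedComponent.ind (fun _ => rfl) c

def induceIso (s : ∀ i, Set (W i)) :
    (sigmaGraph H).induce {x | x.2 ∈ s x.1} ≃g sigmaGraph fun i => (H i).induce (s i) where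
  toFun x := ⟨x.1.1, ⟨x.1.2, x.2⟩⟩
  invFun x := ⟨⟨x.1, x.2.1⟩, x.2.2⟩
  left_inv _ := rfl
  right_inv _ := rfl
  map_rel_iff' := by
    rintro ⟨⟨i, a⟩, ha⟩ ⟨⟨j, b⟩, hb⟩
    by_cases hij : i = j
    · subst hij
      simp
    · exact iff_of_false (hij ∘ fst_eq_of_adj) (hij ∘ fst_eq_of_adj)

end sigmaGraph

section SigmaGraph

variable {ι : Type*} [Fintype ι] {W : ι → Type*} [∀ i, Finite (W i)]
  (H : ∀ i, SimpleGraph (W i))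

lemma numComp_sigmaGraph (s : ∀ i, Set (W i)) :
    numComp (sigmaGraph H) {x | x.2 ∈ s x.1} = ∑ i, numComp (H i) (s i) :=
  (Nat.card_congr ((sigmaGraph.induceIso H s).connectedComponentEquiv.trans
    (sigmaGraph.connectedComponentEquiv _))).trans Nat.card_sigma

lemma card_le_numComp_sigmaGraph {s : ∀ i, Set (W i)} (hs : ∀ i, (s i).Nonempty) :
    Fintype.card ι ≤ numComp (sigmaGraph H) {x | x.2 ∈ s x.1} := by
  rw [numComp_sigmaGraph, Fintype.card_eq_sum_ones]
  exact Finset.sum_le_sum fun i _ => numComp_pos (hs i)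

lemma numComp_sigmaGraph_union_singleton_lt {s : ∀ i, Set (W i)} {i : ι} {a : W i}
    (ha : numComp (H i) (s i ∪ {a}) < numComp (H i) (s i)) :
    numComp (sigmaGraph H) ({x | x.2 ∈ s x.1} ∪ {⟨i, a⟩}) <
      numComp (sigmaGraph H) {x | x.2 ∈ s x.1} := by
  classical
  have hset : {x : Σ i, W i | x.2 ∈ s x.1} ∪ {⟨i, a⟩} =
      {x | x.2 ∈ Function.update s i (s i ∪ {a}) x.1} := by
    ext ⟨j, b⟩
    by_cases hji : j = i
    · subst hji
      simp
    · simp [hji]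
  rw [hset, numComp_sigmaGraph, numComp_sigmaGraph]
  refine Finset.sum_lt_sum (fun j _ => ?_) ⟨i, Finset.mem_univ i, by simpa using ha⟩
  by_cases hji : j = i
  · subst hji
    simpa using ha.le
  · rw [Function.update_of_ne hji]

end SigmaGraph

lemma compl_range_inr_union_image_inl {α β : Type*} (S : Set α) :
    (Set.range (Sum.inr : β → α ⊕ β) ∪ Sum.inl '' S)ᶜ = Sum.inl '' Sᶜ := by
  ext (x | x) <;> simp

section Join

variable {V₁ V₂ : Type*} (G₁ : SimpleGraph V₁) (G₂ : SimpleGraph V₂)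

lemma numComp_join_image_inl (S : Set V₁) :
    numComp (join G₁ G₂) (Sum.inl '' S) = numComp G₁ S :=
  Nat.card_congr (Iso.connectedComponentEquiv
    ⟨Equiv.Set.image Sum.inl S Sum.inl_injective, Iff.rfl⟩).symm

lemma numComp_join_image_inl_union_singleton_inr (S : Set V₁) (v : V₂) :
    numComp (join G₁ G₂) (Sum.inl '' S ∪ {Sum.inr v}) = 1 := by
  refine numComp_eq_one_of_connected
    ((connected_iff_exists_forall_reachable _).mpr ⟨⟨Sum.inr v, Or.inr rfl⟩, ?_⟩)
  rintro ⟨x | w, hx⟩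
  · exact Adj.reachable trivial
  · obtain rfl : w = v := by simpa using hx
    rfl

end Join

theorem stmt12_general {ι : Type*} [Fintype ι] {W : ι → Type*} [∀ i, Fintype (W i)]
    [∀ i, Nonempty (W i)] {V₂ : Type*} [Nonempty V₂]
    (hr : 2 ≤ Fintype.card ι)
    (H : ∀ i, SimpleGraph (W i))
    (G₂ : SimpleGraph V₂)
    (T₁ : ∀ i, Set (W i)) (hT₁ : ∀ i, T₁ i = ∅ ∨ HasCutPointProperty (H i) (T₁ i)) :
    HasCutPointProperty (join (sigmaGraph H) G₂)
      (Set.range Sum.inr ∪ Sum.inl '' {x : Σ i, W i | x.2 ∈ T₁ x.1}) := by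
  have hTc := compl_range_inr_union_image_inl (β := V₂) {x : Σ i, W i | x.2 ∈ T₁ x.1}
  have hcompl : ∀ i, (T₁ i)ᶜ.Nonempty := fun i =>
    (hT₁ i).elim (fun h => by simp [h]) HasCutPointProperty.compl_nonempty
  refine ⟨⟨Sum.inr (Classical.arbitrary V₂), .inl ⟨_, rfl⟩⟩, ?_⟩
  rintro j (⟨v, rfl⟩ | ⟨⟨i, a⟩, ha, rfl⟩)
  · rw [hTc, numComp_join_image_inl_union_singleton_inr, numComp_join_image_inl]
    exact hr.trans (card_le_numComp_sigmaGraph H (s := fun i => (T₁ i)ᶜ) hcompl)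
  · have hcut := ((hT₁ i).resolve_left (Set.nonempty_of_mem (x := a) ha).ne_empty).2 a ha
    rw [hTc, ← Set.image_singleton, ← Set.image_union, numComp_join_image_inl,
      numComp_join_image_inl]
    exact numComp_sigmaGraph_union_singleton_lt H (s := fun i => (T₁ i)ᶜ) hcut

theorem stmt12 {ι : Type*} [Fintype ι] {W : ι → Type*} [∀ i, Fintype (W i)]
    [∀ i, Nonempty (W i)] {V₂ : Type*} [Fintype V₂] [Nonempty V₂]
    (hr : 2 ≤ Fintype.card ι)
    (H : ∀ i, SimpleGraph (W i)) (hconn : ∀ i, (H i).Connected)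
    (G₂ : SimpleGraph V₂)
    (T₁ : ∀ i, Set (W i)) (hT₁ : ∀ i, T₁ i = ∅ ∨ HasCutPointProperty (H i) (T₁ i)) :
    HasCutPointProperty (join (sigmaGraph H) G₂)
      (Set.range Sum.inr ∪ Sum.inl '' {x : Σ i, W i | x.2 ∈ T₁ x.1}) :=
  stmt12_general hr H G₂ T₁ hT₁
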